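/- For d ≥ 1 and any N > d − 1, there exists C > 0 such that for all r > 0 and all η with |η| = r, ∫_{S_r^{d-1}} ⟨η − ξ⟩^{-N} dσ(ξ) ≤ C, where S_r^{d-1} is the sphere of radius r in ℝ^d with surface measure dσ and ⟨ζ⟩ = (1+|ζ|^2)^{1/2}. -/

import Mathlib

/-!
A cap `S_r ∩ B(η, s)` of the sphere has `μH[d-1]`-measure at most `K s^(d-1)` with `K`
independent of `r`. By scaling it suffices to take `r = 1`; there a small cap around `x` is the
image of a ball of the hyperplane `xᗮ` under the Lipschitz graph map `ζ ↦ ζ + √(1 - ‖ζ‖²) x`,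
and a large cap is controlled by the measure of the whole sphere, which is finite by compactness.
The dyadic bound `⟨η - ξ⟩^(-N) ≤ ∑ₖ 2^(-kN) 1_{B(η, 2^(k+1))}(ξ)` then bounds the integral by
`2^(d-1) K ∑ₖ 2^(k(d-1-N))`, a convergent geometric series since `N > d - 1`.
-/

open MeasureTheory Metric Set
open scoped ENNReal Pointwise

theorem Real.abs_sqrt_sub_sqrt_le {a b : ℝ} (ha : 1 / 4 ≤ a) (hb : 1 / 4 ≤ b) :
    |√a - √b| ≤ |a - b| := by
  have hsa : 1 / 2 ≤ √a := Real.le_sqrt_of_sq_le (by linarith)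
  have hsb : 1 / 2 ≤ √b := Real.le_sqrt_of_sq_le (by linarith)
  have hfactor : a - b = (√a - √b) * (√a + √b) := by
    nlinarith [Real.sq_sqrt (by linarith : 0 ≤ a), Real.sq_sqrt (by linarith : 0 ≤ b)]
  calc |√a - √b| ≤ |√a - √b| * (√a + √b) := le_mul_of_one_le_right (abs_nonneg _) (by linarith)
    _ = |a - b| := by rw [hfactor, abs_mul, abs_of_nonneg (by positivity : 0 ≤ √a + √b)]

theorem lipschitzOnWith_add_sqrt_one_sub_sq_smul {F : Type*} [NormedAddCommGroup F]
    [NormedSpace ℝ F] {x : F} (hx : ‖x‖ = 1) :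
    LipschitzOnWith 2 (fun ζ : F => ζ + √(1 - ‖ζ‖ ^ 2) • x) (closedBall 0 (1 / 2)) := by
  refine LipschitzOnWith.of_dist_le_mul fun ζ hζ ζ' hζ' => ?_
  rw [mem_closedBall_zero_iff] at hζ hζ'
  have hheight : |√(1 - ‖ζ‖ ^ 2) - √(1 - ‖ζ'‖ ^ 2)| ≤ ‖ζ - ζ'‖ :=
    calc |√(1 - ‖ζ‖ ^ 2) - √(1 - ‖ζ'‖ ^ 2)|
        ≤ |(1 - ‖ζ‖ ^ 2) - (1 - ‖ζ'‖ ^ 2)| :=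
          Real.abs_sqrt_sub_sqrt_le (by nlinarith [norm_nonneg ζ]) (by nlinarith [norm_nonneg ζ'])
      _ = |‖ζ'‖ - ‖ζ‖| * (‖ζ‖ + ‖ζ'‖) := by
          rw [← abs_of_nonneg (by positivity : 0 ≤ ‖ζ‖ + ‖ζ'‖), ← abs_mul]; ring_nf
      _ ≤ ‖ζ - ζ'‖ * 1 := by
          rw [abs_sub_comm]
          exact mul_le_mul (abs_norm_sub_norm_le _ _) (by linarith) (by positivity) (norm_nonneg _)
      _ = ‖ζ - ζ'‖ := mul_one _
  rw [dist_eq_norm, dist_eq_norm, NNReal.coe_ofNat]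
  calc ‖ζ + √(1 - ‖ζ‖ ^ 2) • x - (ζ' + √(1 - ‖ζ'‖ ^ 2) • x)‖
      = ‖(ζ - ζ') + (√(1 - ‖ζ‖ ^ 2) - √(1 - ‖ζ'‖ ^ 2)) • x‖ := by
        rw [sub_smul]; abel_nf
    _ ≤ ‖ζ - ζ'‖ + |√(1 - ‖ζ‖ ^ 2) - √(1 - ‖ζ'‖ ^ 2)| := by
        grw [norm_add_le, norm_smul, hx, Real.norm_eq_abs, mul_one]
    _ ≤ 2 * ‖ζ - ζ'‖ := by linarith

theorem exists_le_two_pow_succ_and_rpow_le (t : ℝ) {N : ℝ} (hN : 0 ≤ N) :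
    ∃ k : ℕ, t ≤ 2 ^ (k + 1) ∧ (1 + t ^ 2) ^ (-(N / 2)) ≤ ((2 : ℝ) ^ (-N)) ^ k := by
  have hu : 1 ≤ √(1 + t ^ 2) := Real.le_sqrt_of_sq_le (by nlinarith)
  obtain ⟨k, hk, hk'⟩ := exists_nat_pow_near hu one_lt_two
  refine ⟨k, (Real.le_sqrt_of_sq_le (by linarith)).trans hk'.le, ?_⟩
  calc (1 + t ^ 2) ^ (-(N / 2)) = √(1 + t ^ 2) ^ (-N) := by
        rw [Real.sqrt_eq_rpow, ← Real.rpow_mul (by positivity)]; ring_nf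
    _ ≤ ((2 : ℝ) ^ k) ^ (-N) := Real.rpow_le_rpow_of_nonpos (by positivity) hk (by linarith)
    _ = ((2 : ℝ) ^ (-N)) ^ k := by
        rw [← Real.rpow_natCast_mul zero_le_two, mul_comm, Real.rpow_mul_natCast zero_le_two]

theorem lintegral_rpow_one_add_dist_sq_le {X : Type*} [PseudoMetricSpace X] [MeasurableSpace X]
    [OpensMeasurableSpace X] (μ : Measure X) (η : X) {n : ℕ} {N : ℝ} (hnN : n < N) {K : ℝ≥0∞}
    (hK : ∀ s, 0 ≤ s → μ (closedBall η s) ≤ K * ENNReal.ofReal s ^ n) :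
    ∫⁻ ξ, ENNReal.ofReal ((1 + dist η ξ ^ 2) ^ (-(N / 2))) ∂μ ≤
      2 ^ n * K * (1 - ENNReal.ofReal (2 ^ ((n : ℝ) - N)))⁻¹ := by
  set ρ : ℝ := 2 ^ (-N)
  have hρ : ρ * 2 ^ n = 2 ^ ((n : ℝ) - N) := by
    rw [← Real.rpow_natCast, ← Real.rpow_add two_pos, neg_add_eq_sub]
  have hdyadic : ∀ ξ, ENNReal.ofReal ((1 + dist η ξ ^ 2) ^ (-(N / 2))) ≤
      ∑' k : ℕ, (closedBall η ((2 : ℝ) ^ (k + 1))).indicator (fun _ => ENNReal.ofReal (ρ ^ k)) ξ := by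
    intro ξ
    obtain ⟨k, hk, hbound⟩ := exists_le_two_pow_succ_and_rpow_le _ (n.cast_nonneg.trans hnN.le)
    refine le_trans ?_ (ENNReal.le_tsum k)
    rw [indicator_of_mem (mem_closedBall'.2 hk)]
    exact ENNReal.ofReal_le_ofReal hbound
  calc ∫⁻ ξ, ENNReal.ofReal ((1 + dist η ξ ^ 2) ^ (-(N / 2))) ∂μ
      ≤ ∫⁻ ξ, ∑' k : ℕ,
          (closedBall η ((2 : ℝ) ^ (k + 1))).indicator (fun _ => ENNReal.ofReal (ρ ^ k)) ξ ∂μ :=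
        lintegral_mono hdyadic
    _ = ∑' k : ℕ, ENNReal.ofReal (ρ ^ k) * μ (closedBall η (2 ^ (k + 1))) := by
        rw [lintegral_tsum fun k => (measurable_const.indicator measurableSet_closedBall).aemeasurable]
        simp_rw [lintegral_indicator_const measurableSet_closedBall]
    _ ≤ ∑' k : ℕ, 2 ^ n * K * ENNReal.ofReal (2 ^ ((n : ℝ) - N)) ^ k := by
        refine ENNReal.tsum_le_tsum fun k => ?_
        calc ENNReal.ofReal (ρ ^ k) * μ (closedBall η (2 ^ (k + 1)))
            ≤ ENNReal.ofReal (ρ ^ k) * (K * ENNReal.ofReal (2 ^ (k + 1)) ^ n) := by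
              gcongr; exact hK _ (by positivity)
          _ = 2 ^ n * K * ENNReal.ofReal (2 ^ ((n : ℝ) - N)) ^ k := by
              rw [← hρ, ← ENNReal.ofReal_pow (by positivity), ← ENNReal.ofReal_pow (by positivity),
                mul_left_comm, ← ENNReal.ofReal_mul (by positivity), mul_comm _ K, mul_assoc,
                ← ENNReal.ofReal_ofNat 2, ← ENNReal.ofReal_pow zero_le_two,
                ← ENNReal.ofReal_mul (by positivity)]
              ring_nf
    _ = 2 ^ n * K * (1 - ENNReal.ofReal (2 ^ ((n : ℝ) - N)))⁻¹ := by
        rw [ENNReal.tsum_mul_left, ENNReal.tsum_geometric]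

section Sphere

variable {E : Type*} [NormedAddCommGroup E] [InnerProductSpace ℝ E]

theorem sphere_inter_closedBall_subset_image_orthogonal {x : E} (hx : ‖x‖ = 1) {s : ℝ}
    (hs : s ≤ 1 / 2) :
    sphere 0 1 ∩ closedBall x s ⊆
      (fun ζ : E => ζ + √(1 - ‖ζ‖ ^ 2) • x) '' (((ℝ ∙ x)ᗮ : Set E) ∩ closedBall 0 s) := by
  rintro ξ ⟨hξ, hξx⟩
  rw [mem_sphere_zero_iff_norm] at hξ
  rw [mem_closedBall_iff_norm] at hξx
  set c := inner ℝ x ξ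
  have hdist : ‖ξ - x‖ ^ 2 = 2 - 2 * c := by
    rw [norm_sub_sq_real, hξ, hx, real_inner_comm]; ring
  have hc : 0 ≤ c := by nlinarith [norm_nonneg (ξ - x)]
  have hproj : ‖ξ - c • x‖ ^ 2 = 1 - c ^ 2 := by
    rw [norm_sub_sq_real, real_inner_smul_right, norm_smul, hξ, hx, Real.norm_eq_abs,
      real_inner_comm]
    nlinarith [sq_abs c]
  refine ⟨ξ - c • x, ⟨?_, ?_⟩, ?_⟩
  · rw [SetLike.mem_coe, Submodule.mem_orthogonal_singleton_iff_inner_right, inner_sub_right,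
      real_inner_smul_right, real_inner_self_eq_norm_sq, hx]
    ring
  · rw [mem_closedBall_zero_iff]
    have hc1 : c ≤ 1 := by nlinarith [norm_nonneg (ξ - c • x)]
    nlinarith [norm_nonneg (ξ - c • x), norm_nonneg (ξ - x)]
  · simp only [hproj, sub_sub_cancel, Real.sqrt_sq hc, sub_add_cancel]

variable [MeasurableSpace E] [BorelSpace E]

theorem hausdorffMeasure_smul_of_pos (n : ℕ) {r : ℝ} (hr : 0 < r) (A : Set E) :
    μH[n] (r • A) = ENNReal.ofReal r ^ n * μH[n] A := by
  rw [Measure.hausdorffMeasure_smul₀ n.cast_nonneg hr.ne', ENNReal.smul_def, smul_eq_mul,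
    ENNReal.coe_rpow_of_nonneg _ n.cast_nonneg, ENNReal.rpow_natCast, ← enorm_eq_nnnorm,
    Real.enorm_of_nonneg hr.le]

theorem hausdorffMeasure_submodule_inter_closedBall {n : ℕ} (V : Submodule ℝ E)
    (e : V ≃ₗᵢ[ℝ] EuclideanSpace ℝ (Fin n)) {s : ℝ} (hs : 0 ≤ s) :
    μH[n] ((V : Set E) ∩ closedBall 0 s) =
      ENNReal.ofReal (s ^ n) * μH[n] (closedBall (0 : EuclideanSpace ℝ (Fin n)) 1) := by
  have hiso : Isometry (Subtype.val ∘ e.symm) := isometry_subtype_coe.comp e.symm.isometry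
  have himage : (V : Set E) ∩ closedBall 0 s = (Subtype.val ∘ e.symm) '' closedBall 0 s := by
    rw [image_comp, e.symm.image_closedBall, map_zero]
    ext y
    simp [and_comm]
  have hball := (μH[n] : Measure (EuclideanSpace ℝ (Fin n))).addHaar_closedBall' 0 hs
  rw [finrank_euclideanSpace_fin] at hball
  rw [himage, hiso.hausdorffMeasure_image (Or.inl n.cast_nonneg), hball]

variable {n : ℕ} [Fact (Module.finrank ℝ E = n + 1)]

theorem hausdorffMeasure_unitSphere_inter_closedBall_le {x : E} (hx : ‖x‖ = 1) {s : ℝ}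
    (hs₀ : 0 ≤ s) (hs : s ≤ 1 / 2) :
    μH[n] (sphere 0 1 ∩ closedBall x s) ≤
      2 ^ n * μH[n] (closedBall (0 : EuclideanSpace ℝ (Fin n)) 1) * ENNReal.ofReal s ^ n := by
  have hx₀ : x ≠ 0 := by rintro rfl; simp at hx
  set T := ((ℝ ∙ x)ᗮ : Set E) ∩ closedBall 0 s
  have hT : T ⊆ closedBall 0 (1 / 2) := inter_subset_right.trans (closedBall_subset_closedBall hs)
  calc μH[n] (sphere 0 1 ∩ closedBall x s)
      ≤ μH[n] ((fun ζ : E => ζ + √(1 - ‖ζ‖ ^ 2) • x) '' T) :=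
        measure_mono (sphere_inter_closedBall_subset_image_orthogonal hx hs)
    _ ≤ 2 ^ n * μH[n] T := by
        simpa using ((lipschitzOnWith_add_sqrt_one_sub_sq_smul hx).mono hT).hausdorffMeasure_image_le
          n.cast_nonneg
    _ = 2 ^ n * μH[n] (closedBall (0 : EuclideanSpace ℝ (Fin n)) 1) * ENNReal.ofReal s ^ n := by
        rw [hausdorffMeasure_submodule_inter_closedBall _
          (OrthonormalBasis.fromOrthogonalSpanSingleton n hx₀).repr hs₀, ENNReal.ofReal_pow hs₀]
        ring

variable (E n) in
theorem hausdorffMeasure_unitSphere_lt_top : μH[n] (sphere (0 : E) 1) < ∞ := by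
  have : FiniteDimensional ℝ E := .of_fact_finrank_eq_succ n
  refine (isCompact_sphere 0 1).measure_lt_top_of_nhdsWithin fun x hx =>
    ⟨sphere 0 1 ∩ closedBall x (1 / 2),
      inter_mem_nhdsWithin _ (closedBall_mem_nhds x (by norm_num)), ?_⟩
  refine (hausdorffMeasure_unitSphere_inter_closedBall_le (mem_sphere_zero_iff_norm.mp hx)
    (by norm_num) le_rfl).trans_lt ?_
  have : μH[n] (closedBall (0 : EuclideanSpace ℝ (Fin n)) 1) < ∞ := measure_closedBall_lt_top
  finiteness

theorem hausdorffMeasure_sphere_inter_closedBall_le {r : ℝ} (hr : 0 < r) {η : E} (hη : ‖η‖ = r)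
    {s : ℝ} (hs : 0 ≤ s) :
    μH[n] (sphere 0 r ∩ closedBall η s) ≤
      2 ^ n * (μH[n] (closedBall (0 : EuclideanSpace ℝ (Fin n)) 1) + μH[n] (sphere (0 : E) 1)) *
        ENNReal.ofReal s ^ n := by
  have hsphere : sphere (0 : E) r = r • sphere 0 1 := by
    rw [smul_sphere' hr.ne', smul_zero, Real.norm_of_nonneg hr.le, mul_one]
  rcases le_or_gt s (r / 2) with hsr | hsr
  · have hcap :
        sphere 0 r ∩ closedBall η s = r • (sphere 0 1 ∩ closedBall (r⁻¹ • η) (s / r)) := by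
      rw [smul_set_inter₀ hr.ne', ← hsphere, smul_closedBall' hr.ne', smul_inv_smul₀ hr.ne',
        Real.norm_of_nonneg hr.le, mul_div_cancel₀ _ hr.ne']
    have hunit : ‖r⁻¹ • η‖ = 1 := by
      rw [norm_smul, hη, norm_inv, Real.norm_of_nonneg hr.le, inv_mul_cancel₀ hr.ne']
    calc μH[n] (sphere 0 r ∩ closedBall η s)
        ≤ ENNReal.ofReal r ^ n * (2 ^ n * μH[n] (closedBall (0 : EuclideanSpace ℝ (Fin n)) 1) *
            ENNReal.ofReal (s / r) ^ n) := by
          rw [hcap, hausdorffMeasure_smul_of_pos n hr]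
          gcongr
          exact hausdorffMeasure_unitSphere_inter_closedBall_le hunit (by positivity)
            ((div_le_iff₀ hr).2 (by linarith))
      _ = 2 ^ n * μH[n] (closedBall (0 : EuclideanSpace ℝ (Fin n)) 1) * ENNReal.ofReal s ^ n := by
          rw [← ENNReal.ofReal_pow hr.le, ← ENNReal.ofReal_pow (by positivity),
            ← ENNReal.ofReal_pow hs, mul_comm, mul_assoc, ← ENNReal.ofReal_mul (by positivity),
            ← mul_pow, div_mul_cancel₀ _ hr.ne']
      _ ≤ _ := by gcongr; exact le_self_add
  · calc μH[n] (sphere 0 r ∩ closedBall η s)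
        ≤ ENNReal.ofReal r ^ n * μH[n] (sphere (0 : E) 1) := by
          rw [← hausdorffMeasure_smul_of_pos n hr, ← hsphere]
          exact measure_mono inter_subset_left
      _ ≤ ENNReal.ofReal (2 * s) ^ n * μH[n] (sphere (0 : E) 1) := by
          gcongr; linarith
      _ = 2 ^ n * μH[n] (sphere (0 : E) 1) * ENNReal.ofReal s ^ n := by
          rw [ENNReal.ofReal_mul zero_le_two, mul_pow, ENNReal.ofReal_ofNat]; ring
      _ ≤ _ := by gcongr; exact le_add_self

theorem exists_lintegral_sphere_rpow_one_add_dist_sq_le {N : ℝ} (hN : n < N) :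
    ∃ C < ∞, ∀ r, 0 < r → ∀ η : E, ‖η‖ = r →
      ∫⁻ ξ in sphere 0 r, ENNReal.ofReal ((1 + dist η ξ ^ 2) ^ (-(N / 2))) ∂μH[n] ≤ C := by
  set K := 2 ^ n * (μH[n] (closedBall (0 : EuclideanSpace ℝ (Fin n)) 1) + μH[n] (sphere (0 : E) 1))
  have hK : K < ∞ := by
    have : μH[n] (closedBall (0 : EuclideanSpace ℝ (Fin n)) 1) < ∞ := measure_closedBall_lt_top
    have := hausdorffMeasure_unitSphere_lt_top E n
    finiteness
  have hq : ENNReal.ofReal (2 ^ ((n : ℝ) - N)) < 1 := by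
    rw [ENNReal.ofReal_lt_one]
    exact Real.rpow_lt_one_of_one_lt_of_neg one_lt_two (by linarith)
  refine ⟨2 ^ n * K * (1 - ENNReal.ofReal (2 ^ ((n : ℝ) - N)))⁻¹, ?_, fun r hr η hη => ?_⟩
  · have : (1 - ENNReal.ofReal (2 ^ ((n : ℝ) - N)))⁻¹ ≠ ∞ :=
      ENNReal.inv_ne_top.2 (tsub_pos_of_lt hq).ne'
    finiteness
  refine lintegral_rpow_one_add_dist_sq_le _ η hN fun s hs => ?_
  rw [Measure.restrict_apply measurableSet_closedBall, inter_comm]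
  exact hausdorffMeasure_sphere_inter_closedBall_le hr hη hs

end Sphere

/-- Uniform-in-`r` bound on integrals over spheres of radius `r` of rapidly decaying
functions centered at a point of the sphere: for `N > d-1` there is `C` with
`∫_{S_r^{d-1}} ⟨η−ξ⟩^{-N} dσ(ξ) ≤ C` for all `r > 0` and `|η| = r`. -/
theorem stmt5 (d : ℕ) (hd : 1 ≤ d) (N : ℝ) (hN : (d : ℝ) - 1 < N) :
    ∃ C > 0, ∀ r : ℝ, 0 < r → ∀ η : EuclideanSpace ℝ (Fin d), ‖η‖ = r →
      ∫ ξ in Metric.sphere (0 : EuclideanSpace ℝ (Fin d)) r,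
        (1 + ‖η - ξ‖ ^ 2) ^ (-(N / 2)) ∂μH[(d : ℝ) - 1] ≤ C := by
  obtain ⟨n, rfl⟩ : ∃ n, d = n + 1 := ⟨d - 1, by omega⟩
  have : Fact (Module.finrank ℝ (EuclideanSpace ℝ (Fin (n + 1))) = n + 1) :=
    ⟨finrank_euclideanSpace_fin⟩
  simp only [Nat.cast_add, Nat.cast_one, add_sub_cancel_right] at hN ⊢
  obtain ⟨C, hC, hbound⟩ :=
    exists_lintegral_sphere_rpow_one_add_dist_sq_le (E := EuclideanSpace ℝ (Fin (n + 1))) hN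
  refine ⟨C.toReal + 1, by positivity, fun r hr η hη => ?_⟩
  rw [integral_eq_lintegral_of_nonneg_ae (ae_of_all _ fun _ => by positivity)
    (Continuous.aestronglyMeasurable <| (by fun_prop : Continuous fun ξ => 1 + ‖η - ξ‖ ^ 2)
      |>.rpow_const fun _ => Or.inl (by positivity))]
  calc _ ≤ C.toReal := ENNReal.toReal_mono hC.ne (by simpa [dist_eq_norm] using hbound r hr η hη)
    _ ≤ C.toReal + 1 := le_add_of_nonneg_right zero_le_one
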